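/- arXiv:1204.2540 — 2 statements merged into one kernel-verified Lean document; each statement's English description precedes it below -/
import Mathlib

section
/- Let φ = (1+√5)/2 and let m > 2 be an integer. If (i₁,…,i_k) is a strictly increasing tuple of integers with k ≥ 2, i₁ = m, i_{j+1} ≥ i_j + 2 for all j, and i₂ − m is odd, and n = F_{i₁} + ⋯ + F_{i_k}, then ‖n·φ‖ < φ^{−m}. -/
/-- The golden mean φ = (1 + √5)/2. -/
noncomputable def phi : ℝ := (1 + Real.sqrt 5) / 2

/-- The distance from a real number to the nearest integer. -/
noncomputable def distNearestInt (x : ℝ) : ℝ := |x - round x|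

noncomputable def psi : ℝ := 1 - phi

lemma sqrt5_sq : Real.sqrt 5 ^ 2 = 5 := Real.sq_sqrt (by norm_num)

lemma one_lt_phi : 1 < phi := by
  have h : (1:ℝ) < Real.sqrt 5 := by
    nlinarith [Real.sqrt_nonneg 5, sqrt5_sq]
  unfold phi; linarith

lemma phi_pos : 0 < phi := lt_trans one_pos one_lt_phi

lemma phi_sq : phi ^ 2 = phi + 1 := by
  unfold phi; nlinarith [sqrt5_sq]

lemma psi_eq : psi = -phi⁻¹ := by
  have := phi_pos.ne'
  field_simp [psi]
  unfold psi; nlinarith [phi_sq]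

lemma abs_psi : |psi| = phi⁻¹ := by
  rw [psi_eq, abs_neg, abs_of_pos (inv_pos.mpr phi_pos)]

lemma zpow_neg_nat (k : ℕ) : phi ^ (-(k:ℤ)) = phi⁻¹ ^ k := by
  rw [zpow_neg, zpow_natCast, inv_pow]

lemma abs_psi_pow (i : ℕ) : |psi ^ i| = phi ^ (-(i:ℤ)) := by
  rw [abs_pow, abs_psi, zpow_neg_nat]

lemma fib_phi : ∀ i : ℕ, (Nat.fib i : ℝ) * phi = (Nat.fib (i+1) : ℝ) - psi ^ i := by
  intro i
  induction i using Nat.twoStepInduction with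
  | zero => simp
  | one => simp [psi, Nat.fib]
  | more n h1 h2 =>
    have hpsq : psi ^ 2 = psi + 1 := by unfold psi; nlinarith [phi_sq]
    rw [Nat.fib_add_two, Nat.fib_add_two (n := n + 1)]
    push_cast
    have e1 : psi ^ (n + 2) = psi ^ n * (psi + 1) := by rw [← hpsq]; ring
    have e2 : psi ^ (n + 1) = psi ^ n * psi := by rw [pow_succ]
    rw [e1]
    rw [e2] at h2
    nlinarith [h1, h2]

lemma sum_fib_phi (l : List ℕ) :
    ((l.map Nat.fib).sum : ℝ) * phi =
      ((l.map (fun i => Nat.fib (i+1))).sum : ℝ) - (l.map (fun i => psi ^ i)).sum := by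
  induction l with
  | nil => simp
  | cons a t ih =>
    simp only [List.map_cons, List.sum_cons]
    rw [Nat.cast_add, add_mul, ih, fib_phi, Nat.cast_add]
    ring

lemma tail_bound : ∀ (l : List ℕ), l.Chain' (fun a b => a + 2 ≤ b) →
    ∀ c : ℕ, (l = [] ∨ c ≤ l.headI) →
    |(l.map (fun i => psi ^ i)).sum| ≤ phi ^ (1 - (c:ℤ)) := by
  intro l
  induction l with
  | nil =>
    intro _ c _
    simp only [List.map_nil, List.sum_nil, abs_zero]
    exact (zpow_pos phi_pos _).le
  | cons a t ih =>
    intro hch c hc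
    have ha : c ≤ a := by
      rcases hc with h | h
      · exact absurd h (by simp)
      · simpa using h
    have hch' : t.Chain' (fun a b => a + 2 ≤ b) := hch.tail
    have hcond : t = [] ∨ a + 2 ≤ t.headI := by
      cases t with
      | nil => left; rfl
      | cons b t' => right; simpa using (List.isChain_cons_cons.mp hch).1
    have ht := ih hch' (a + 2) hcond
    have hcast : ((a + 2 : ℕ) : ℤ) = (a : ℤ) + 2 := by push_cast; ring
    rw [hcast] at ht
    simp only [List.map_cons, List.sum_cons]
    have key : phi ^ (-(a:ℤ)) + phi ^ (1 - ((a:ℤ) + 2)) = phi ^ (1 - (a:ℤ)) := by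
      have h0 := phi_pos.ne'
      have e1 : (1:ℤ) - ((a:ℤ) + 2) = -(a:ℤ) + (-1) := by ring
      have e2 : (1:ℤ) - (a:ℤ) = -(a:ℤ) + 1 := by ring
      rw [e1, e2, zpow_add₀ h0, zpow_add₀ h0, zpow_neg_one, zpow_one]
      have hip : (1:ℝ) + phi⁻¹ = phi := by
        field_simp
        nlinarith [phi_sq]
      nlinarith [zpow_pos phi_pos (-(a:ℤ)), hip]
    calc |psi ^ a + (t.map (fun i => psi ^ i)).sum|
        ≤ |psi ^ a| + |(t.map (fun i => psi ^ i)).sum| := abs_add_le _ _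
      _ ≤ phi ^ (-(a:ℤ)) + phi ^ (1 - ((a:ℤ) + 2)) := by
          rw [abs_psi_pow]; linarith
      _ = phi ^ (1 - (a:ℤ)) := key
      _ ≤ phi ^ (1 - (c:ℤ)) := by
          apply zpow_le_zpow_right₀ one_lt_phi.le
          omega

/-- Let `m > 2`.  If `(i₁, …, i_k)` is a strictly increasing tuple of integers with `k ≥ 2`,
`i₁ = m`, consecutive entries differing by at least 2, `i₂ − m` odd, and
`n = F i₁ + ⋯ + F i_k`, then `‖n·φ‖ < φ^(−m)`. -/
theorem dist_lt_of_second_odd (m : ℕ) (hm : 2 < m) (l : List ℕ) (hlen : 2 ≤ l.length)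
    (hhead : l.headI = m) (hchain : l.Chain' (fun a b => a + 2 ≤ b))
    (hodd : Odd (l.tail.headI - m))
    (n : ℕ) (hn : n = (l.map Nat.fib).sum) :
    distNearestInt ((n : ℝ) * phi) < phi ^ (-(m : ℤ)) := by
  obtain ⟨a, b, t, rfl⟩ : ∃ a b t, l = a :: b :: t := by
    match l, hlen with
    | a :: b :: t, _ => exact ⟨a, b, t, rfl⟩
  have ham : a = m := by simpa using hhead
  subst ham
  have hab : a + 2 ≤ b := (List.isChain_cons_cons.mp hchain).1
  have hoddb : Odd (b - a) := by simpa using hodd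
  obtain ⟨d, hd1, hbd⟩ : ∃ d : ℕ, Odd d ∧ b = a + d := ⟨b - a, hoddb, by omega⟩
  set S : ℝ := ((a :: b :: t).map (fun i => psi ^ i)).sum with hS
  set N : ℕ := ((a :: b :: t).map (fun i => Nat.fib (i+1))).sum with hN
  have hrepr : (n : ℝ) * phi = (N : ℝ) - S := by
    rw [hn]
    exact sum_fib_phi (a :: b :: t)
  have hdist : distNearestInt ((n : ℝ) * phi) ≤ |S| := by
    unfold distNearestInt
    calc |(n:ℝ) * phi - round ((n:ℝ) * phi)| ≤ |(n:ℝ) * phi - (N:ℤ)| :=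
          round_le ((n : ℝ) * phi) (N : ℤ)
      _ = |S| := by
          rw [hrepr]; push_cast
          rw [show (N:ℝ) - S - (N:ℝ) = -S by ring, abs_neg]
  have hSsplit : S = (psi ^ a + psi ^ b) + (t.map (fun i => psi ^ i)).sum := by
    simp only [hS, List.map_cons, List.sum_cons]; ring
  have hpsid : psi ^ d = -(phi⁻¹ ^ d) := by
    rw [psi_eq, hd1.neg_pow]
  have hphle : phi⁻¹ ^ d ≤ 1 :=
    pow_le_one₀ (inv_pos.mpr phi_pos).le (inv_le_one_of_one_le₀ one_lt_phi.le)
  have habs2 : |psi ^ a + psi ^ b| = phi ^ (-(a:ℤ)) - phi ^ (-(b:ℤ)) := by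
    have h1 : psi ^ a + psi ^ b = psi ^ a * (1 - phi⁻¹ ^ d) := by
      rw [hbd, pow_add, hpsid]; ring
    rw [h1, abs_mul, abs_pow, abs_psi,
      abs_of_nonneg (show (0:ℝ) ≤ 1 - phi⁻¹ ^ d by linarith),
      zpow_neg_nat, zpow_neg_nat, hbd, pow_add]
    ring
  have hcht : t.Chain' (fun a b => a + 2 ≤ b) := hchain.tail.tail
  have htcond : t = [] ∨ b + 2 ≤ t.headI := by
    cases t with
    | nil => left; rfl
    | cons c t' => right; simpa using ((List.isChain_cons_cons.mp hchain).2.rel_head)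
  have habsR := tail_bound t hcht (b + 2) htcond
  have hcast : ((b + 2 : ℕ) : ℤ) = (b : ℤ) + 2 := by push_cast; ring
  rw [hcast] at habsR
  have hRlt : phi ^ (1 - ((b:ℤ) + 2)) < phi ^ (-(b:ℤ)) := by
    apply zpow_lt_zpow_right₀ one_lt_phi
    omega
  have hSabs : |S| < phi ^ (-(a:ℤ)) := by
    calc |S| ≤ |psi ^ a + psi ^ b| + |(t.map (fun i => psi ^ i)).sum| := by
          rw [hSsplit]; exact abs_add_le _ _
      _ ≤ (phi ^ (-(a:ℤ)) - phi ^ (-(b:ℤ))) + phi ^ (1 - ((b:ℤ) + 2)) := by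
          rw [habs2]; linarith
      _ < phi ^ (-(a:ℤ)) := by linarith
  exact lt_of_le_of_lt hdist hSabs
end

section
/- Let φ = (1+√5)/2 and F the Fibonacci sequence with F₁ = F₂ = 1. For all integers m ≥ 1 and i ≥ 1, φ^{−i}·(1 − φ^{−2m})/(1 + φ^{−2m}) < F_m / F_{m+i} < φ^{−i}·(1 + φ^{−2m})/(1 − φ^{−2m}). -/
lemma phi_eq_gold : phi = Real.goldenRatio := rfl

lemma fib_bounds (n : ℕ) :
    Real.goldenRatio ^ n - (Real.goldenRatio ^ n)⁻¹ ≤ Real.sqrt 5 * Nat.fib n ∧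
    Real.sqrt 5 * Nat.fib n ≤ Real.goldenRatio ^ n + (Real.goldenRatio ^ n)⁻¹ := by
  have hs : (0:ℝ) < Real.sqrt 5 := Real.sqrt_pos.mpr (by norm_num)
  have h := Real.coe_fib_eq n
  have hfib : Real.sqrt 5 * Nat.fib n = Real.goldenRatio ^ n - Real.goldenConj ^ n := by
    rw [h]; field_simp
  have habs : |Real.goldenConj ^ n| = (Real.goldenRatio ^ n)⁻¹ := by
    rw [abs_pow, ← inv_pow]
    congr 1
    rw [abs_of_nonpos (le_of_lt Real.goldenConj_neg), Real.inv_goldenRatio]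
  have h1 : Real.goldenConj ^ n ≤ (Real.goldenRatio ^ n)⁻¹ := habs ▸ le_abs_self _
  have h2 : -(Real.goldenRatio ^ n)⁻¹ ≤ Real.goldenConj ^ n := by
    have := neg_abs_le (Real.goldenConj ^ n); rw [habs] at this; exact this
  constructor <;> rw [hfib] <;> linarith

set_option maxHeartbeats 800000 in
/-- For all integers `m ≥ 1` and `i ≥ 1`,
`φ^(−i)·(1 − φ^(−2m))/(1 + φ^(−2m)) < F m / F (m+i) < φ^(−i)·(1 + φ^(−2m))/(1 − φ^(−2m))`. -/
theorem fib_ratio_bounds (m i : ℕ) (hm : 1 ≤ m) (hi : 1 ≤ i) :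
    phi ^ (-(i : ℤ)) * (1 - phi ^ (-(2 * m : ℤ))) / (1 + phi ^ (-(2 * m : ℤ))) <
      (Nat.fib m : ℝ) / (Nat.fib (m + i) : ℝ) ∧
    (Nat.fib m : ℝ) / (Nat.fib (m + i) : ℝ) <
      phi ^ (-(i : ℤ)) * (1 + phi ^ (-(2 * m : ℤ))) / (1 - phi ^ (-(2 * m : ℤ))) := by
  have hp : (1:ℝ) < Real.goldenRatio := Real.one_lt_goldenRatio
  have hp0 : (0:ℝ) < Real.goldenRatio := by linarith
  set A : ℝ := Real.goldenRatio ^ m with hA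
  set B : ℝ := Real.goldenRatio ^ i with hB
  have hA1 : 1 < A := one_lt_pow₀ hp (by omega)
  have hB1 : 1 < B := one_lt_pow₀ hp (by omega)
  have hA0 : 0 < A := by linarith
  have hB0 : 0 < B := by linarith
  have hA'0 : 0 < A⁻¹ := inv_pos.mpr hA0
  have hB'0 : 0 < B⁻¹ := inv_pos.mpr hB0
  have hA'1 : A⁻¹ < 1 := inv_lt_one_of_one_lt₀ hA1
  have hB'1 : B⁻¹ < 1 := inv_lt_one_of_one_lt₀ hB1
  have hAA : A * A⁻¹ = 1 := mul_inv_cancel₀ (ne_of_gt hA0)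
  have hBB : B * B⁻¹ = 1 := mul_inv_cancel₀ (ne_of_gt hB0)
  -- rewrite zpows
  have e1 : phi ^ (-(i : ℤ)) = B⁻¹ := by
    rw [phi_eq_gold, zpow_neg, zpow_natCast]
  have e2 : phi ^ (-(2 * m : ℤ)) = A⁻¹ * A⁻¹ := by
    rw [phi_eq_gold, show (-(2 * m : ℤ)) = -((2*m : ℕ) : ℤ) by push_cast; ring,
      zpow_neg, zpow_natCast, ← mul_inv, ← pow_add]
    congr 2
    omega
  have hs : (0:ℝ) < Real.sqrt 5 := Real.sqrt_pos.mpr (by norm_num)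
  obtain ⟨hFl, hFu⟩ := fib_bounds m
  obtain ⟨hGl, hGu⟩ := fib_bounds (m + i)
  have hpow : Real.goldenRatio ^ (m + i) = A * B := pow_add _ _ _
  rw [hpow, mul_inv] at hGl hGu
  have hF0 : (0:ℝ) < Nat.fib m := by
    exact_mod_cast Nat.fib_pos.mpr (by omega)
  have hG0 : (0:ℝ) < Nat.fib (m + i) := by
    exact_mod_cast Nat.fib_pos.mpr (by omega)
  rw [← hA] at hFl hFu
  have hAne : A ≠ 0 := ne_of_gt hA0
  have hBne : B ≠ 0 := ne_of_gt hB0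
  have ha2 : 0 < 1 - A⁻¹ * A⁻¹ := by nlinarith
  have ha2' : 0 < 1 + A⁻¹ * A⁻¹ := by nlinarith
  have hb2 : 0 < 1 - B⁻¹ * B⁻¹ := by nlinarith
  set F : ℝ := (Nat.fib m : ℝ)
  set G : ℝ := (Nat.fib (m + i) : ℝ)
  clear_value A B F G
  rw [e1, e2]
  constructor
  · rw [div_lt_div_iff₀ (by linarith) hG0]
    have c1 : B⁻¹ * (1 - A⁻¹ * A⁻¹) * (Real.sqrt 5 * G)
        ≤ B⁻¹ * (1 - A⁻¹ * A⁻¹) * (A * B + A⁻¹ * B⁻¹) :=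
      mul_le_mul_of_nonneg_left hGu (by positivity)
    have c2 : B⁻¹ * (1 - A⁻¹ * A⁻¹) * (A * B + A⁻¹ * B⁻¹)
        < (1 + A⁻¹ * A⁻¹) * (A - A⁻¹) := by
      have hdiff : (1 + A⁻¹ * A⁻¹) * (A - A⁻¹)
          - B⁻¹ * (1 - A⁻¹ * A⁻¹) * (A * B + A⁻¹ * B⁻¹)
          = A⁻¹ * (1 - A⁻¹ * A⁻¹) * (1 - B⁻¹ * B⁻¹) := by
        field_simp
        ring
      nlinarith [mul_pos (mul_pos hA'0 ha2) hb2]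
    have c3 : (1 + A⁻¹ * A⁻¹) * (A - A⁻¹) ≤ (1 + A⁻¹ * A⁻¹) * (Real.sqrt 5 * F) :=
      mul_le_mul_of_nonneg_left hFl (by positivity)
    have chain : Real.sqrt 5 * (B⁻¹ * (1 - A⁻¹ * A⁻¹) * G)
        < Real.sqrt 5 * (F * (1 + A⁻¹ * A⁻¹)) := by
      have e3 : Real.sqrt 5 * (B⁻¹ * (1 - A⁻¹ * A⁻¹) * G)
          = B⁻¹ * (1 - A⁻¹ * A⁻¹) * (Real.sqrt 5 * G) := by ring
      have e4 : Real.sqrt 5 * (F * (1 + A⁻¹ * A⁻¹))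
          = (1 + A⁻¹ * A⁻¹) * (Real.sqrt 5 * F) := by ring
      rw [e3, e4]; linarith
    exact lt_of_mul_lt_mul_left chain hs.le
  · rw [div_lt_div_iff₀ hG0 (by linarith)]
    have c1 : (1 - A⁻¹ * A⁻¹) * (Real.sqrt 5 * F)
        ≤ (1 - A⁻¹ * A⁻¹) * (A + A⁻¹) :=
      mul_le_mul_of_nonneg_left hFu (by positivity)
    have c2 : (1 - A⁻¹ * A⁻¹) * (A + A⁻¹)
        < B⁻¹ * (1 + A⁻¹ * A⁻¹) * (A * B - A⁻¹ * B⁻¹) := by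
      have hdiff : B⁻¹ * (1 + A⁻¹ * A⁻¹) * (A * B - A⁻¹ * B⁻¹)
          - (1 - A⁻¹ * A⁻¹) * (A + A⁻¹)
          = A⁻¹ * (1 + A⁻¹ * A⁻¹) * (1 - B⁻¹ * B⁻¹) := by
        field_simp
        ring
      nlinarith [mul_pos (mul_pos hA'0 ha2') hb2]
    have c3 : B⁻¹ * (1 + A⁻¹ * A⁻¹) * (A * B - A⁻¹ * B⁻¹)
        ≤ B⁻¹ * (1 + A⁻¹ * A⁻¹) * (Real.sqrt 5 * G) :=
      mul_le_mul_of_nonneg_left hGl (by positivity)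
    have chain : Real.sqrt 5 * (F * (1 - A⁻¹ * A⁻¹))
        < Real.sqrt 5 * (B⁻¹ * (1 + A⁻¹ * A⁻¹) * G) := by
      have e3 : Real.sqrt 5 * (F * (1 - A⁻¹ * A⁻¹))
          = (1 - A⁻¹ * A⁻¹) * (Real.sqrt 5 * F) := by ring
      have e4 : Real.sqrt 5 * (B⁻¹ * (1 + A⁻¹ * A⁻¹) * G)
          = B⁻¹ * (1 + A⁻¹ * A⁻¹) * (Real.sqrt 5 * G) := by ring
      rw [e3, e4]; linarith
    exact lt_of_mul_lt_mul_left chain hs.le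
end
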